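/- arXiv:2411.04688 — 4 statements merged into one kernel-verified Lean document; each statement's English description precedes it below -/
import Mathlib

section
/- With the notation of the previous statement, partition {1,...,m} into m/k consecutive blocks B₁,...,B_{m/k} of size k. Then (m/k)·F(ρ,ψ) ≤ ∑_{j=1}^{m/k} F(ρ_{Bⱼ}, ψ_{Bⱼ}), and consequently 1 - (m/k)(1 - F(ρ,ψ)) ≤ W^{(k)}(ρ,ψ) := 1 - ∑_{j=1}^{m/k} (1 - F(ρ_{Bⱼ}, ψ_{Bⱼ})). -/
/-! Fix a block `j` and split the product vector as `ψⱼ ⊗ φ`, where `φ` is the product of the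
other factors, a unit vector. Expanding `φ = ∑_w φ_w e_w` and factoring `ρ = B⋆B`, the
Cauchy–Schwarz inequality gives
`⟨ψⱼ ⊗ φ, ρ (ψⱼ ⊗ φ)⟩ ≤ ‖φ‖² ∑_w ⟨ψⱼ ⊗ e_w, ρ (ψⱼ ⊗ e_w)⟩ = ⟨ψⱼ, ρⱼ ψⱼ⟩`,
the last sum being the partial trace over the other blocks. So `F(ρ, ψ) ≤ F(ρⱼ, ψⱼ)` for each of
the `n` blocks; summing gives the first inequality, and the second is a rearrangement of it. -/

open Matrix ComplexOrder

/-- Partial trace of a multi-block operator onto the block `j`. -/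
noncomputable def redMat {n : ℕ} {I : Fin n → Type*} [∀ j, Fintype (I j)]
    [∀ j, DecidableEq (I j)]
    (ρ : Matrix (∀ j, I j) (∀ j, I j) ℂ) (j : Fin n) : Matrix (I j) (I j) ℂ :=
  fun a b => ∑ y : ∀ i, I i, if y j = a then ρ y (Function.update y j b) else 0

section RCLike

variable {𝕜 : Type*} [RCLike 𝕜]

lemma norm_sum_smul_sq_le {ι E : Type*} [SeminormedAddCommGroup E] [NormedSpace 𝕜 E]
    (s : Finset ι) (c : ι → 𝕜) (w : ι → E) :
    ‖∑ i ∈ s, c i • w i‖ ^ 2 ≤ (∑ i ∈ s, ‖c i‖ ^ 2) * ∑ i ∈ s, ‖w i‖ ^ 2 :=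
  calc ‖∑ i ∈ s, c i • w i‖ ^ 2 ≤ (∑ i ∈ s, ‖c i‖ * ‖w i‖) ^ 2 := by
        gcongr
        exact (norm_sum_le _ _).trans_eq (by simp only [norm_smul])
    _ ≤ _ := Finset.sum_mul_sq_le_sq_mul_sq _ _ _

lemma Matrix.re_dotProduct_conjTranspose_mul_self_mulVec {α β : Type*} [Fintype α] [Fintype β]
    (B : Matrix β α 𝕜) (x : α → 𝕜) :
    RCLike.re (star x ⬝ᵥ (Bᴴ * B) *ᵥ x) = ‖WithLp.toLp 2 (B *ᵥ x)‖ ^ 2 := by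
  rw [← mulVec_mulVec, dotProduct_mulVec, vecMul_conjTranspose, star_star,
    ← @inner_self_eq_norm_sq 𝕜, EuclideanSpace.inner_toLp_toLp, dotProduct_comm]

open scoped MatrixOrder in
lemma Matrix.PosSemidef.re_dotProduct_sum_smul_mulVec_le {α ι : Type*} [Fintype α] [Fintype ι]
    {A : Matrix α α 𝕜} (hA : A.PosSemidef) (c : ι → 𝕜) (u : ι → α → 𝕜) :
    RCLike.re (star (∑ i, c i • u i) ⬝ᵥ A *ᵥ ∑ i, c i • u i) ≤
      (∑ i, ‖c i‖ ^ 2) * ∑ i, RCLike.re (star (u i) ⬝ᵥ A *ᵥ u i) := by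
  classical
  obtain ⟨B, rfl⟩ := CStarAlgebra.nonneg_iff_eq_star_mul_self.mp hA.nonneg
  simp only [star_eq_conjTranspose, re_dotProduct_conjTranspose_mul_self_mulVec]
  rw [mulVec_sum, WithLp.toLp_sum]
  simp only [mulVec_smul, WithLp.toLp_smul]
  exact norm_sum_smul_sq_le _ _ _

def Matrix.partialTraceRight {α β R : Type*} [Fintype β] [AddCommMonoid R]
    (A : Matrix (α × β) (α × β) R) : Matrix α α R :=
  fun a b => ∑ w, A (a, w) (b, w)

lemma Matrix.PosSemidef.re_dotProduct_prod_mulVec_le {α β : Type*} [Fintype α] [Fintype β]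
    {A : Matrix (α × β) (α × β) 𝕜} (hA : A.PosSemidef) (ψ : α → 𝕜) (φ : β → 𝕜) :
    RCLike.re (star (fun p => ψ p.1 * φ p.2) ⬝ᵥ A *ᵥ fun p => ψ p.1 * φ p.2) ≤
      (∑ w, ‖φ w‖ ^ 2) * RCLike.re (star ψ ⬝ᵥ A.partialTraceRight *ᵥ ψ) := by
  classical
  set u : β → α × β → 𝕜 := fun w p => if p.2 = w then ψ p.1 else 0
  have hdecomp : (fun p : α × β => ψ p.1 * φ p.2) = ∑ w, φ w • u w := by
    ext p
    simp [u, Finset.sum_apply, mul_comm]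
  have hsum : ∑ w, star (u w) ⬝ᵥ A *ᵥ u w = star ψ ⬝ᵥ A.partialTraceRight *ᵥ ψ := by
    simp only [u, dotProduct, mulVec, Fintype.sum_prod_type, partialTraceRight, Pi.star_apply,
      apply_ite star, star_zero, ite_mul, zero_mul, mul_ite, mul_zero, Finset.sum_ite_irrel,
      Finset.sum_const_zero, Finset.sum_ite_eq', Finset.mem_univ, if_true, Finset.mul_sum]
    rw [Finset.sum_comm]
    simp only [Finset.sum_mul, Finset.mul_sum]
    exact Finset.sum_congr rfl fun a _ => Finset.sum_comm
  rw [hdecomp, ← hsum, map_sum]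
  exact hA.re_dotProduct_sum_smul_mulVec_le φ u

end RCLike

lemma Equiv.update_piSplitAt_symm {ι : Type*} [DecidableEq ι] {β : ι → Type*} (i : ι)
    (p : β i × ∀ j : {j // j ≠ i}, β j) (b : β i) :
    Function.update ((Equiv.piSplitAt i β).symm p) i b = (Equiv.piSplitAt i β).symm (b, p.2) := by
  ext j
  by_cases h : j = i
  · subst h; simp
  · simp [h]

lemma redMat_eq_partialTraceRight {n : ℕ} {I : Fin n → Type*} [∀ j, Fintype (I j)]
    [∀ j, DecidableEq (I j)] (ρ : Matrix (∀ j, I j) (∀ j, I j) ℂ) (j : Fin n) :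
    redMat ρ j = (ρ.submatrix (Equiv.piSplitAt j I).symm
      (Equiv.piSplitAt j I).symm).partialTraceRight := by
  ext a b
  rw [redMat, partialTraceRight, ← Equiv.sum_comp (Equiv.piSplitAt j I).symm, Fintype.sum_prod_type]
  simp [Equiv.update_piSplitAt_symm]

lemma prod_comp_piSplitAt_symm {ι : Type*} [Fintype ι] [DecidableEq ι] {β : ι → Type*}
    {M : Type*} [CommMonoid M] (f : ∀ i, β i → M) (i : ι) :
    (fun x : ∀ i, β i => ∏ k, f k (x k)) ∘ (Equiv.piSplitAt i β).symm =
      fun p => f i p.1 * ∏ k : {k // k ≠ i}, f k (p.2 k) := by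
  ext p
  rw [Function.comp_apply, Fintype.prod_eq_mul_prod_subtype_ne _ i]
  congr 1
  · simp
  · exact Finset.prod_congr rfl fun k _ => by simp [k.2]

lemma sum_norm_prod_sq {ι : Type*} [Fintype ι] [DecidableEq ι] {β : ι → Type*} [∀ i, Fintype (β i)]
    {𝕜 : Type*} [NormedField 𝕜] (f : ∀ i, β i → 𝕜) :
    ∑ x : ∀ i, β i, ‖∏ i, f i (x i)‖ ^ 2 = ∏ i, ∑ a, ‖f i a‖ ^ 2 := by
  simp only [norm_prod, ← Finset.prod_pow]
  exact (Fintype.prod_sum fun i a => ‖f i a‖ ^ 2).symm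

lemma Matrix.dotProduct_submatrix_equiv_mulVec {α β R : Type*} [Fintype α] [Fintype β]
    [CommSemiring R] [StarRing R] (A : Matrix α α R) (v : α → R) (e : β ≃ α) :
    star (v ∘ e) ⬝ᵥ A.submatrix e e *ᵥ (v ∘ e) = star v ⬝ᵥ A *ᵥ v := by
  rw [submatrix_mulVec_equiv, Function.comp_assoc, e.self_comp_symm, Function.comp_id]
  exact comp_equiv_dotProduct_comp_equiv (star v) (A *ᵥ v) e

lemma Matrix.trace_mul_vecMulVec_star {α R : Type*} [Fintype α] [CommSemiring R] [StarRing R]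
    (A : Matrix α α R) (v : α → R) :
    (A * vecMulVec v (star v)).trace = star v ⬝ᵥ A *ᵥ v := by
  rw [trace_mul_comm, vecMulVec_mul, trace_vecMulVec, dotProduct_comm, dotProduct_mulVec]

lemma Matrix.PosSemidef.re_trace_mul_vecMulVec_prod_le_redMat {n : ℕ} {I : Fin n → Type*}
    [∀ j, Fintype (I j)] [∀ j, DecidableEq (I j)]
    {ρ : Matrix (∀ j, I j) (∀ j, I j) ℂ} (hρ : ρ.PosSemidef)
    {ψ : ∀ j, I j → ℂ} (hψ : ∀ j, ∑ a, ‖ψ j a‖ ^ 2 = 1) (j : Fin n) :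
    ((ρ * vecMulVec (fun x : ∀ i, I i => ∏ i, ψ i (x i))
        (star fun x : ∀ i, I i => ∏ i, ψ i (x i))).trace).re ≤
      ((redMat ρ j * vecMulVec (ψ j) (star (ψ j))).trace).re := by
  have hφ : ∑ w : ∀ k : {k // k ≠ j}, I k, ‖∏ k : {k // k ≠ j}, ψ k (w k)‖ ^ 2 = 1 := by
    rw [sum_norm_prod_sq]
    exact Finset.prod_eq_one fun k _ => hψ k
  rw [trace_mul_vecMulVec_star, trace_mul_vecMulVec_star, redMat_eq_partialTraceRight,
    ← dotProduct_submatrix_equiv_mulVec _ _ (Equiv.piSplitAt j I).symm, prod_comp_piSplitAt_symm]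
  simpa only [hφ, one_mul, RCLike.re_to_complex] using
    (hρ.submatrix (Equiv.piSplitAt j I).symm).re_dotProduct_prod_mulVec_le (ψ j)
      fun w => ∏ k : {k // k ≠ j}, ψ k (w k)

theorem witness_robustness_lower_bound_general {n : ℕ} {I : Fin n → Type*}
    [∀ j, Fintype (I j)] [∀ j, DecidableEq (I j)]
    (ρ : Matrix (∀ j, I j) (∀ j, I j) ℂ) (hρ : ρ.PosSemidef)
    (ψ : ∀ j, I j → ℂ) (hψ : ∀ j, ∑ a, ‖ψ j a‖ ^ 2 = 1) :
    (n : ℝ) *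
        ((ρ * vecMulVec (fun x : ∀ i, I i => ∏ i, ψ i (x i))
            (star fun x : ∀ i, I i => ∏ i, ψ i (x i))).trace).re ≤
      (∑ j, ((redMat ρ j * vecMulVec (ψ j) (star (ψ j))).trace).re) ∧
    1 - (n : ℝ) * (1 -
        ((ρ * vecMulVec (fun x : ∀ i, I i => ∏ i, ψ i (x i))
            (star fun x : ∀ i, I i => ∏ i, ψ i (x i))).trace).re) ≤
      1 - ∑ j, (1 - ((redMat ρ j * vecMulVec (ψ j) (star (ψ j))).trace).re) := by
  set F := ((ρ * vecMulVec (fun x : ∀ i, I i => ∏ i, ψ i (x i))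
    (star fun x : ∀ i, I i => ∏ i, ψ i (x i))).trace).re
  set G := fun j => ((redMat ρ j * vecMulVec (ψ j) (star (ψ j))).trace).re
  have hsum : (n : ℝ) * F ≤ ∑ j, G j :=
    calc (n : ℝ) * F = ∑ _j : Fin n, F := by simp
      _ ≤ ∑ j, G j := Finset.sum_le_sum fun j _ => hρ.re_trace_mul_vecMulVec_prod_le_redMat hψ j
  refine ⟨hsum, ?_⟩
  simp only [Finset.sum_sub_distrib, Finset.sum_const, Finset.card_univ, Fintype.card_fin,
    nsmul_eq_mul, mul_one]
  linarith

/-- Left inequality of Eq. (24) of Lemma 2: with `m` modes grouped into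
`n = m/k` blocks (the `j`-th block Hilbert space being `I j`),
`(m/k)·F(ρ,ψ) ≤ ∑ⱼ F(ρ_{Bⱼ}, ψ_{Bⱼ})`, hence
`1 - (m/k)(1 - F(ρ,ψ)) ≤ W^{(k)}(ρ,ψ) = 1 - ∑ⱼ (1 - F(ρ_{Bⱼ}, ψ_{Bⱼ}))`. -/
theorem witness_robustness_lower_bound {n : ℕ} {I : Fin n → Type*}
    [∀ j, Fintype (I j)] [∀ j, DecidableEq (I j)]
    (ρ : Matrix (∀ j, I j) (∀ j, I j) ℂ) (hρ : ρ.PosSemidef) (htr : ρ.trace = 1)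
    (ψ : ∀ j, I j → ℂ) (hψ : ∀ j, ∑ a, ‖ψ j a‖ ^ 2 = 1) :
    (n : ℝ) *
        ((ρ * vecMulVec (fun x : ∀ i, I i => ∏ i, ψ i (x i))
            (star fun x : ∀ i, I i => ∏ i, ψ i (x i))).trace).re ≤
      (∑ j, ((redMat ρ j * vecMulVec (ψ j) (star (ψ j))).trace).re) ∧
    1 - (n : ℝ) * (1 -
        ((ρ * vecMulVec (fun x : ∀ i, I i => ∏ i, ψ i (x i))
            (star fun x : ∀ i, I i => ∏ i, ψ i (x i))).trace).re) ≤
      1 - ∑ j, (1 - ((redMat ρ j * vecMulVec (ψ j) (star (ψ j))).trace).re) :=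
  witness_robustness_lower_bound_general ρ hρ ψ hψ
end

section
/- Let ρ be a density operator on an m-fold tensor product and ψ = ψ₁ ⊗ ... ⊗ ψ_m a product of unit vectors, with m = (m/k)·k partitioned into blocks B₁,...,B_{m/k}. Then W^{(k)}(ρ,ψ) := 1 - ∑_{j=1}^{m/k} (1 - F(ρ_{Bⱼ}, ψ_{Bⱼ})) ≤ F(ρ, ψ), i.e., the k-mode fidelity witness is a lower bound on the true multimode fidelity. -/
/-!
Write `Pⱼ = I ⊗ |ψⱼ⟩⟨ψⱼ| ⊗ I`. These are commuting projections whose product is `|ψ⟩⟨ψ|`.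
For commuting projections `p, q` the difference `(1 - p) + (1 - q) - (1 - p q) = (1 - p) (1 - q)`
is again a projection, hence positive, so by induction `1 - |ψ⟩⟨ψ| ≤ ∑ⱼ (1 - Pⱼ)` in the Loewner
order. Since `tr (ρ A) ≥ 0` for `A ≥ 0`, pairing with `ρ` preserves this inequality, and
`tr (ρ Pⱼ) = tr (ρⱼ |ψⱼ⟩⟨ψⱼ|)` turns it into `1 - F(ρ, ψ) ≤ ∑ⱼ (1 - F(ρⱼ, ψⱼ))`.
-/

open Matrix ComplexOrder

namespace IsStarProjection

theorem one_sub_mul_le {R : Type*} [Ring R] [PartialOrder R] [StarRing R] [StarOrderedRing R]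
    {p q : R} (hp : IsStarProjection p) (hq : IsStarProjection q) (hpq : Commute p q) :
    1 - p * q ≤ (1 - p) + (1 - q) := by
  have hcomm : Commute (1 - p) (1 - q) :=
    (Commute.one_left _).sub_left ((Commute.one_right p).sub_right hpq)
  rw [← sub_nonneg]
  convert (hp.one_sub.mul hq.one_sub hcomm).nonneg using 1
  noncomm_ring

end IsStarProjection

namespace Matrix

variable {ι : Type*} [Fintype ι] {R : Type*}

def piKronecker {l m : ι → Type*} [CommSemiring R] (A : ∀ i, Matrix (l i) (m i) R) :
    Matrix (∀ i, l i) (∀ i, m i) R :=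
  fun x y => ∏ i, A i (x i) (y i)

section CommSemiring

variable [CommSemiring R] {l m n : ι → Type*}

@[simp]
lemma piKronecker_apply (A : ∀ i, Matrix (l i) (m i) R) (x : ∀ i, l i) (y : ∀ i, m i) :
    piKronecker A x y = ∏ i, A i (x i) (y i) :=
  rfl

lemma piKronecker_mul [DecidableEq ι] [∀ i, Fintype (m i)] (A : ∀ i, Matrix (l i) (m i) R)
    (B : ∀ i, Matrix (m i) (n i) R) :
    piKronecker A * piKronecker B = piKronecker fun i => A i * B i := by
  ext x y
  simp only [mul_apply, piKronecker_apply, ← Finset.prod_mul_distrib]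
  exact (Fintype.prod_sum fun i (c : m i) => A i (x i) c * B i c (y i)).symm

lemma piKronecker_one [∀ i, DecidableEq (m i)] :
    piKronecker (fun i => (1 : Matrix (m i) (m i) R)) = 1 := by
  ext x y
  simp only [piKronecker_apply, one_apply, Finset.prod_boole, Finset.mem_univ, forall_const,
    funext_iff]

lemma piKronecker_vecMulVec (u : ∀ i, l i → R) (v : ∀ i, m i → R) :
    piKronecker (fun i => vecMulVec (u i) (v i)) =
      vecMulVec (fun x => ∏ i, u i (x i)) (fun y => ∏ i, v i (y i)) := by
  ext x y
  simp [vecMulVec_apply, Finset.prod_mul_distrib]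

lemma conjTranspose_piKronecker [StarRing R] (A : ∀ i, Matrix (l i) (m i) R) :
    (piKronecker A)ᴴ = piKronecker fun i => (A i)ᴴ := by
  ext x y
  simp [star_prod]

lemma commute_piKronecker [DecidableEq ι] [∀ i, Fintype (m i)] {A B : ∀ i, Matrix (m i) (m i) R}
    (h : ∀ i, Commute (A i) (B i)) : Commute (piKronecker A) (piKronecker B) := by
  simp only [Commute, SemiconjBy, piKronecker_mul, fun i => (h i).eq]

lemma isStarProjection_piKronecker [StarRing R] [DecidableEq ι] [∀ i, Fintype (m i)]
    {A : ∀ i, Matrix (m i) (m i) R} (h : ∀ i, IsStarProjection (A i)) :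
    IsStarProjection (piKronecker A) where
  isIdempotentElem := by
    simp only [IsIdempotentElem, piKronecker_mul, fun i => (h i).isIdempotentElem.eq]
  isSelfAdjoint := by
    rw [IsSelfAdjoint, star_eq_conjTranspose, conjTranspose_piKronecker]
    exact congrArg piKronecker (funext fun i => (h i).isSelfAdjoint)

lemma piKronecker_update_one_apply [DecidableEq ι] [∀ i, Fintype (m i)] [∀ i, DecidableEq (m i)]
    (j : ι) (A : Matrix (m j) (m j) R) (x y : ∀ i, m i) :
    piKronecker (Function.update (fun _ => 1) j A) x y =
      ∑ b, if x = Function.update y j b then A b (y j) else 0 := by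
  have hrest : ∏ i ∈ {j}ᶜ, Function.update (fun i => (1 : Matrix (m i) (m i) R)) j A i (x i) (y i)
      = ∏ i ∈ {j}ᶜ, if x i = y i then 1 else 0 := by
    refine Finset.prod_congr rfl fun i hi => ?_
    rw [Finset.mem_compl, Finset.mem_singleton] at hi
    rw [Function.update_of_ne hi, one_apply]
  simp only [Function.eq_update_iff, ite_and, Finset.sum_ite_eq, Finset.mem_univ, if_true]
  rw [piKronecker_apply, Fintype.prod_eq_mul_prod_compl j, hrest, Finset.prod_boole,
    Function.update_self, mul_ite, mul_one, mul_zero]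
  simp only [Finset.mem_compl, Finset.mem_singleton]

end CommSemiring

lemma isStarProjection_vecMulVec_star {m : Type*} [Fintype m] [CommSemiring R] [StarRing R]
    {v : m → R} (hv : star v ⬝ᵥ v = 1) : IsStarProjection (vecMulVec v (star v)) where
  isIdempotentElem := by
    rw [IsIdempotentElem, vecMulVec_mul_vecMulVec, hv, one_smul]
  isSelfAdjoint := by
    rw [IsSelfAdjoint, star_eq_conjTranspose, conjTranspose_vecMulVec, star_star]

open scoped MatrixOrder in
lemma PosSemidef.trace_mul_nonneg {𝕜 : Type*} [RCLike 𝕜] {n : Type*} [Fintype n] [DecidableEq n]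
    {A B : Matrix n n 𝕜} (hA : A.PosSemidef) (hB : B.PosSemidef) : 0 ≤ (A * B).trace := by
  set S := CFC.sqrt A
  have hS : Sᴴ = S := (CFC.sqrt_nonneg A).isSelfAdjoint
  calc (0 : 𝕜) ≤ (Sᴴ * B * S).trace := (hB.conjTranspose_mul_mul_same S).trace_nonneg
    _ = (S * S * B).trace := by rw [hS, trace_mul_cycle]
    _ = (A * B).trace := by rw [CFC.sqrt_mul_sqrt_self A hA.nonneg]

section productProjector

variable [DecidableEq ι] {m : ι → Type*} [∀ i, DecidableEq (m i)]

section CommRing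

variable {R : Type*} [CommRing R] [StarRing R] (ψ : ∀ i, m i → R)

noncomputable def productProjector (s : Finset ι) : Matrix (∀ i, m i) (∀ i, m i) R :=
  piKronecker fun i => if i ∈ s then vecMulVec (ψ i) (star (ψ i)) else 1

lemma productProjector_empty : productProjector ψ ∅ = 1 := by
  simp [productProjector, piKronecker_one]

lemma productProjector_singleton (j : ι) :
    productProjector ψ {j} =
      piKronecker (Function.update (fun _ => 1) j (vecMulVec (ψ j) (star (ψ j)))) := by
  rw [productProjector]
  congr 1
  funext i
  by_cases hi : i = j
  · subst hi; simp
  · simp [hi]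

lemma productProjector_univ :
    productProjector ψ Finset.univ =
      vecMulVec (fun x => ∏ i, ψ i (x i)) (star fun x => ∏ i, ψ i (x i)) := by
  simp only [productProjector, Finset.mem_univ, if_true, piKronecker_vecMulVec]
  congr 1
  ext x
  simp [star_prod]

variable [∀ i, Fintype (m i)]

lemma productProjector_insert {a : ι} {s : Finset ι} (ha : a ∉ s) :
    productProjector ψ (insert a s) = productProjector ψ {a} * productProjector ψ s := by
  rw [productProjector, productProjector, productProjector, piKronecker_mul]
  congr 1
  funext i
  by_cases hi : i = a
  · subst hi; simp [ha]
  · simp [hi]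

lemma commute_productProjector (s t : Finset ι) :
    Commute (productProjector ψ s) (productProjector ψ t) := by
  refine commute_piKronecker fun i => ?_
  split_ifs
  all_goals first | exact Commute.refl _ | exact Commute.one_left _ | exact Commute.one_right _

variable {ψ}

lemma isStarProjection_productProjector (hψ : ∀ i, star (ψ i) ⬝ᵥ ψ i = 1) (s : Finset ι) :
    IsStarProjection (productProjector ψ s) := by
  refine isStarProjection_piKronecker fun i => ?_
  split_ifs
  · exact isStarProjection_vecMulVec_star (hψ i)
  · exact .one _

end CommRing

open scoped MatrixOrder in
lemma one_sub_productProjector_le_sum [∀ i, Fintype (m i)] {𝕜 : Type*} [RCLike 𝕜] {ψ : ∀ i, m i → 𝕜}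
    (hψ : ∀ i, star (ψ i) ⬝ᵥ ψ i = 1) (s : Finset ι) :
    1 - productProjector ψ s ≤ ∑ j ∈ s, (1 - productProjector ψ {j}) := by
  induction s using Finset.induction_on with
  | empty => rw [productProjector_empty, sub_self, Finset.sum_empty]
  | insert a s ha ih =>
    rw [productProjector_insert ψ ha, Finset.sum_insert ha]
    exact ((isStarProjection_productProjector hψ _).one_sub_mul_le
      (isStarProjection_productProjector hψ _) (commute_productProjector ψ _ _)).trans
      (add_le_add le_rfl ih)

end productProjector

end Matrix

lemma trace_redMat_mul {n : ℕ} {I : Fin n → Type*} [∀ j, Fintype (I j)] [∀ j, DecidableEq (I j)]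
    (ρ : Matrix (∀ j, I j) (∀ j, I j) ℂ) (j : Fin n) (A : Matrix (I j) (I j) ℂ) :
    (redMat ρ j * A).trace = (ρ * piKronecker (Function.update (fun _ => 1) j A)).trace := by
  have hlhs : (redMat ρ j * A).trace =
      ∑ y : ∀ i, I i, ∑ b : I j, ρ y (Function.update y j b) * A b (y j) := by
    simp only [trace, diag, mul_apply, redMat, Finset.sum_mul, ite_mul, zero_mul]
    rw [Finset.sum_congr rfl fun a _ => Finset.sum_comm, Finset.sum_comm]
    refine Finset.sum_congr rfl fun y _ => ?_
    rw [Finset.sum_comm]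
    simp
  rw [hlhs]
  simp only [trace, diag, mul_apply, piKronecker_update_one_apply, Finset.mul_sum, mul_ite,
    mul_zero]
  refine Finset.sum_congr rfl fun y _ => ?_
  rw [Finset.sum_comm]
  simp

/-- Right inequality of Eq. (24) of Lemma 2: the k-mode fidelity witness is a
lower bound on the true multimode fidelity,
`W^{(k)}(ρ,ψ) = 1 - ∑ⱼ (1 - F(ρ_{Bⱼ}, ψ_{Bⱼ})) ≤ F(ρ,ψ)`. -/
theorem k_mode_witness_le_fidelity {n : ℕ} {I : Fin n → Type*}
    [∀ j, Fintype (I j)] [∀ j, DecidableEq (I j)]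
    (ρ : Matrix (∀ j, I j) (∀ j, I j) ℂ) (hρ : ρ.PosSemidef) (htr : ρ.trace = 1)
    (ψ : ∀ j, I j → ℂ) (hψ : ∀ j, ∑ a, ‖ψ j a‖ ^ 2 = 1) :
    1 - ∑ j, (1 - ((redMat ρ j * vecMulVec (ψ j) (star (ψ j))).trace).re) ≤
      ((ρ * vecMulVec (fun x : ∀ i, I i => ∏ i, ψ i (x i))
          (star fun x : ∀ i, I i => ∏ i, ψ i (x i))).trace).re := by
  have hunit : ∀ j, star (ψ j) ⬝ᵥ ψ j = 1 := fun j => by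
    simp only [dotProduct, Pi.star_apply, Complex.star_def, Complex.conj_mul']
    exact_mod_cast hψ j
  have hgap : 0 ≤ (ρ * (∑ j, (1 - productProjector ψ {j}) -
      (1 - productProjector ψ Finset.univ))).trace := by
    open scoped MatrixOrder in
    exact hρ.trace_mul_nonneg (le_iff.mp (one_sub_productProjector_le_sum hunit _))
  simp only [mul_sub, Finset.mul_sum, trace_sub, trace_sum, mul_one, htr] at hgap
  have hgap_re := (Complex.le_def.mp hgap).1
  simp only [Complex.zero_re, Complex.sub_re, Complex.re_sum, Complex.one_re] at hgap_re
  simp only [trace_redMat_mul, ← productProjector_singleton, ← productProjector_univ]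
  linarith
end

section
/- Let t ∈ (0,1) and k, l, p ∈ ℕ with p ≥ 1. Let ρ be a positive semidefinite trace-one operator on ℓ²(ℕ) with entries ρ_{m,n}. Then |∑_{q=p}^{∞} ρ_{k+q, l+q} · t^q · C(q−1, p−1) · √(C(k+q, k) · C(l+q, l))| ≤ max_{q ≥ p} ( t^q · C(q−1, p−1) · √(C(k+q, k) · C(l+q, l)) ), and the maximum on the right-hand side is finite (attained at some finite q) since t^q times any polynomial in q tends to 0. -/
/-!
Testing the positivity of `ρ` on the vector `(1, -u)` supported on `{i, j}`, where `u` is the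
phase with `ρ i j * u = ‖ρ i j‖`, gives `2 ‖ρ i j‖ ≤ Re ρ i i + Re ρ j j`. Along the two shifted
diagonals `k + q` and `l + q` this makes the entries `ρ (k + q) (l + q)` absolutely summable with
sum at most `Tr ρ = 1`. The weight is `t ^ q` times a polynomial in `q`, so it tends to `0` and
attains its maximum `M` over `q ≥ p`; the series is then bounded by `M` times that sum.
-/

/-- The weight `h(q) = t^q C(q−1,p−1) √(C(k+q,k) C(l+q,l))` of the bias series
of the heterodyne estimator `g_{k,l}^{(p)}`. -/
noncomputable def hetWeight (t : ℝ) (k l p q : ℕ) : ℝ :=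
  t ^ q * ((q - 1).choose (p - 1) : ℝ) *
    Real.sqrt (((k + q).choose k : ℝ) * ((l + q).choose l : ℝ))

open Filter Topology ComplexConjugate

theorem Filter.Tendsto.exists_ge_forall_le_of_lt {α : Type*} [LinearOrder α] [TopologicalSpace α]
    [OrderTopology α] {f : ℕ → α} {a : α} (hf : Tendsto f atTop (𝓝 a)) {p : ℕ} (hp : a < f p) :
    ∃ q₀, p ≤ q₀ ∧ ∀ q, p ≤ q → f q ≤ f q₀ := by
  have hfar : ∀ᶠ j in cocompact ℕ, f (j + p) ≤ f (0 + p) := by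
    rw [cocompact_eq_atTop, zero_add]
    exact ((hf.comp (tendsto_add_atTop_nat p)).eventually (gt_mem_nhds hp)).mono fun _ h => h.le
  obtain ⟨j₀, hj₀⟩ := continuous_of_discreteTopology.exists_forall_ge' 0 hfar
  refine ⟨j₀ + p, Nat.le_add_left p j₀, fun q hq => ?_⟩
  obtain ⟨j, rfl⟩ := Nat.exists_eq_add_of_le' hq
  exact hj₀ j

section PositiveKernel

variable {ι : Type*} {ρ : ι → ι → ℂ}

theorem re_apply_self_nonneg
    (hpos : ∀ (s : Finset ι) (v : ι → ℂ), 0 ≤ (∑ i ∈ s, ∑ j ∈ s, conj (v i) * ρ i j * v j).re)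
    (i : ι) : 0 ≤ (ρ i i).re := by
  simpa using hpos {i} fun _ => 1

theorem norm_apply_le_avg_re_diag
    (hherm : ∀ i j, ρ j i = conj (ρ i j))
    (hpos : ∀ (s : Finset ι) (v : ι → ℂ), 0 ≤ (∑ i ∈ s, ∑ j ∈ s, conj (v i) * ρ i j * v j).re)
    (i j : ι) : ‖ρ i j‖ ≤ ((ρ i i).re + (ρ j j).re) / 2 := by
  classical
  rcases eq_or_ne i j with rfl | hij
  · have hreal : ((ρ i i).re : ℂ) = ρ i i := Complex.conj_eq_iff_re.mp (hherm i i).symm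
    nth_rewrite 1 [← hreal]
    rw [Complex.norm_real, Real.norm_of_nonneg (re_apply_self_nonneg hpos i)]
    linarith
  set c := ρ i j
  set u : ℂ := Complex.exp (↑(-c.arg) * Complex.I)
  have hcu : c * u = ‖c‖ := by
    nth_rewrite 1 [← c.norm_mul_exp_arg_mul_I]
    rw [mul_assoc, ← Complex.exp_add, Complex.ofReal_neg, neg_mul, add_neg_cancel,
      Complex.exp_zero, mul_one]
  have huu : conj u * u = 1 := by
    rw [Complex.conj_mul', Complex.norm_exp_ofReal_mul_I]; simp
  have h := hpos {i, j} fun m => if m = i then 1 else -u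
  have hform : 0 ≤ (ρ i i + conj u * u * ρ j j - (c * u + conj (c * u))).re := by
    convert h using 2
    simp only [Finset.sum_pair hij, if_pos, if_neg hij.symm, hherm i j, map_one, map_neg, map_mul]
    ring
  rw [hcu, huu, Complex.conj_ofReal] at hform
  simp only [Complex.sub_re, Complex.add_re, one_mul, Complex.ofReal_re] at hform
  linarith

theorem summable_norm_comp_and_tsum_le_trace
    (hherm : ∀ i j, ρ j i = conj (ρ i j))
    (hpos : ∀ (s : Finset ι) (v : ι → ℂ), 0 ≤ (∑ i ∈ s, ∑ j ∈ s, conj (v i) * ρ i j * v j).re)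
    (hsum : Summable fun i => (ρ i i).re) {κ : Type*} {e₁ e₂ : κ → ι}
    (he₁ : Function.Injective e₁) (he₂ : Function.Injective e₂) :
    Summable (fun j => ‖ρ (e₁ j) (e₂ j)‖) ∧
      ∑' j, ‖ρ (e₁ j) (e₂ j)‖ ≤ ∑' i, (ρ i i).re := by
  have hdiag := re_apply_self_nonneg hpos
  have hsub : ∀ {e : κ → ι}, Function.Injective e →
      Summable (fun j => (ρ (e j) (e j)).re) ∧ ∑' j, (ρ (e j) (e j)).re ≤ ∑' i, (ρ i i).re :=
    fun he => ⟨hsum.comp_injective he,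
      (hsum.comp_injective he).tsum_le_tsum_of_inj _ he (fun i _ => hdiag i) (fun _ => le_rfl) hsum⟩
  obtain ⟨hs₁, hle₁⟩ := hsub he₁
  obtain ⟨hs₂, hle₂⟩ := hsub he₂
  have hmaj : Summable fun j => ((ρ (e₁ j) (e₁ j)).re + (ρ (e₂ j) (e₂ j)).re) / 2 :=
    (hs₁.add hs₂).div_const 2
  have hbound := fun j => norm_apply_le_avg_re_diag hherm hpos (e₁ j) (e₂ j)
  have hnorm : Summable fun j => ‖ρ (e₁ j) (e₂ j)‖ :=
    hmaj.of_nonneg_of_le (fun _ => norm_nonneg _) hbound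
  refine ⟨hnorm, ?_⟩
  calc ∑' j, ‖ρ (e₁ j) (e₂ j)‖
      ≤ ∑' j, ((ρ (e₁ j) (e₁ j)).re + (ρ (e₂ j) (e₂ j)).re) / 2 := hnorm.tsum_le_tsum hbound hmaj
    _ = ((∑' j, (ρ (e₁ j) (e₁ j)).re) + ∑' j, (ρ (e₂ j) (e₂ j)).re) / 2 := by
        rw [tsum_div_const, hs₁.tsum_add hs₂]
    _ ≤ ∑' i, (ρ i i).re := by linarith

end PositiveKernel

theorem tendsto_natCast_add_pow_mul_pow_atTop_zero (m d : ℕ) {t : ℝ} (ht0 : 0 < t) (ht1 : t < 1) :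
    Tendsto (fun q : ℕ => ((q + m : ℕ) : ℝ) ^ d * t ^ q) atTop (𝓝 0) := by
  have h := ((tendsto_pow_const_mul_const_pow_of_abs_lt_one d (abs_lt.mpr ⟨by linarith, ht1⟩)).comp
    (tendsto_add_atTop_nat m)).div_const (t ^ m)
  rw [zero_div] at h
  refine h.congr fun q => ?_
  simp only [Function.comp_apply, pow_add]
  field_simp

section Weight

variable {t : ℝ} (k l p q : ℕ)

theorem hetWeight_nonneg (ht : 0 ≤ t) : 0 ≤ hetWeight t k l p q := by
  unfold hetWeight; positivity

theorem hetWeight_self_pos (ht : 0 < t) : 0 < hetWeight t k l p p := by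
  have hchoose : 0 < (k + p).choose k * (l + p).choose l :=
    Nat.mul_pos (Nat.choose_pos (Nat.le_add_right k p)) (Nat.choose_pos (Nat.le_add_right l p))
  unfold hetWeight
  rw [Nat.choose_self, Nat.cast_one, mul_one]
  exact mul_pos (pow_pos ht p) (Real.sqrt_pos.mpr (by exact_mod_cast hchoose))

theorem hetWeight_le_pow_mul_pow (ht : 0 ≤ t) :
    hetWeight t k l p q ≤ ((q + (k + l) : ℕ) : ℝ) ^ (p - 1 + (k + l)) * t ^ q := by
  set n := q + (k + l)
  have hbinom : (q - 1).choose (p - 1) ≤ n ^ (p - 1) :=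
    (Nat.choose_le_pow _ _).trans (Nat.pow_le_pow_left (by omega) _)
  have hprod : (k + q).choose k * (l + q).choose l ≤ n ^ (k + l) := by
    rw [pow_add]
    exact Nat.mul_le_mul ((Nat.choose_le_pow _ _).trans (Nat.pow_le_pow_left (by omega) _))
      ((Nat.choose_le_pow _ _).trans (Nat.pow_le_pow_left (by omega) _))
  have hpos : 0 < (k + q).choose k * (l + q).choose l :=
    Nat.mul_pos (Nat.choose_pos (Nat.le_add_right k q)) (Nat.choose_pos (Nat.le_add_right l q))
  have hsqrt : √(((k + q).choose k : ℝ) * ((l + q).choose l : ℝ)) ≤ (n : ℝ) ^ (k + l) :=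
    calc √(((k + q).choose k : ℝ) * ((l + q).choose l : ℝ))
        ≤ ((k + q).choose k : ℝ) * ((l + q).choose l : ℝ) :=
          Real.sqrt_le_self_iff.mpr (Or.inr (by exact_mod_cast hpos))
      _ ≤ (n : ℝ) ^ (k + l) := by exact_mod_cast hprod
  calc hetWeight t k l p q ≤ t ^ q * (n : ℝ) ^ (p - 1) * (n : ℝ) ^ (k + l) := by
        unfold hetWeight; gcongr; exact_mod_cast hbinom
    _ = (n : ℝ) ^ (p - 1 + (k + l)) * t ^ q := by ring

theorem tendsto_hetWeight_atTop_zero (ht0 : 0 < t) (ht1 : t < 1) :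
    Tendsto (hetWeight t k l p) atTop (𝓝 0) :=
  squeeze_zero (fun q => hetWeight_nonneg k l p q ht0.le)
    (fun q => hetWeight_le_pow_mul_pow k l p q ht0.le)
    (tendsto_natCast_add_pow_mul_pow_atTop_zero _ _ ht0 ht1)

end Weight

theorem summable_mul_and_norm_tsum_le {κ R : Type*} [NormedRing R] [CompleteSpace R]
    {a w : κ → R} {M : ℝ} (ha : Summable fun j => ‖a j‖) (hw : ∀ j, ‖w j‖ ≤ M) :
    Summable (fun j => a j * w j) ∧ ‖∑' j, a j * w j‖ ≤ M * ∑' j, ‖a j‖ := by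
  have hbound : ∀ j, ‖a j * w j‖ ≤ ‖a j‖ * M := fun j =>
    (norm_mul_le _ _).trans (mul_le_mul_of_nonneg_left (hw j) (norm_nonneg _))
  have hmaj : Summable fun j => ‖a j‖ * M := ha.mul_right M
  refine ⟨hmaj.of_norm_bounded hbound, ?_⟩
  calc ‖∑' j, a j * w j‖ ≤ ∑' j, ‖a j‖ * M := tsum_of_norm_bounded hmaj.hasSum hbound
    _ = M * ∑' j, ‖a j‖ := by rw [tsum_mul_right, mul_comm]

theorem heterodyne_bias_tight_bound_general (t : ℝ) (ht0 : 0 < t) (ht1 : t < 1)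
    (k l p : ℕ) (ρ : ℕ → ℕ → ℂ)
    (hherm : ∀ i j, ρ j i = (starRingEnd ℂ) (ρ i j))
    (hpos : ∀ (s : Finset ℕ) (v : ℕ → ℂ),
      0 ≤ (∑ i ∈ s, ∑ j ∈ s, (starRingEnd ℂ) (v i) * ρ i j * v j).re)
    (hsum : Summable fun i => (ρ i i).re)
    (htr : ∑' i, (ρ i i).re = 1) :
    ∃ q₀ : ℕ, p ≤ q₀ ∧
      (∀ q, p ≤ q → hetWeight t k l p q ≤ hetWeight t k l p q₀) ∧
      Summable (fun j : ℕ =>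
        ρ (k + (p + j)) (l + (p + j)) * (hetWeight t k l p (p + j) : ℂ)) ∧
      ‖∑' j : ℕ, ρ (k + (p + j)) (l + (p + j)) * (hetWeight t k l p (p + j) : ℂ)‖ ≤
        hetWeight t k l p q₀ := by
  obtain ⟨q₀, hpq₀, hmax⟩ := (tendsto_hetWeight_atTop_zero k l p ht0 ht1).exists_ge_forall_le_of_lt
    (hetWeight_self_pos k l p ht0)
  have hM : 0 ≤ hetWeight t k l p q₀ := hetWeight_nonneg k l p q₀ ht0.le
  obtain ⟨hnorm, htrace⟩ := summable_norm_comp_and_tsum_le_trace hherm hpos hsum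
    ((add_right_injective k).comp (add_right_injective p))
    ((add_right_injective l).comp (add_right_injective p))
  have hweight : ∀ j, ‖(hetWeight t k l p (p + j) : ℂ)‖ ≤ hetWeight t k l p q₀ := fun j => by
    rw [Complex.norm_real, Real.norm_of_nonneg (hetWeight_nonneg k l p _ ht0.le)]
    exact hmax _ (Nat.le_add_right p j)
  obtain ⟨hsummable, hbound⟩ := summable_mul_and_norm_tsum_le hnorm hweight
  refine ⟨q₀, hpq₀, hmax, hsummable, hbound.trans ?_⟩
  calc hetWeight t k l p q₀ * ∑' j, ‖ρ (k + (p + j)) (l + (p + j))‖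
      ≤ hetWeight t k l p q₀ * 1 := mul_le_mul_of_nonneg_left (htrace.trans htr.le) hM
    _ = hetWeight t k l p q₀ := mul_one _

/-- Tight bias bound for the heterodyne estimator: for a positive semidefinite
trace-one operator `ρ` on `ℓ²(ℕ)` and `t ∈ (0,1)`, the bias series
`∑_{q≥p} ρ_{k+q,l+q} t^q C(q−1,p−1) √(C(k+q,k)C(l+q,l))` converges, the weight
attains a finite maximum over `q ≥ p`, and the series is bounded in norm by
that maximum. -/
theorem heterodyne_bias_tight_bound (t : ℝ) (ht0 : 0 < t) (ht1 : t < 1)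
    (k l p : ℕ) (hp : 1 ≤ p) (ρ : ℕ → ℕ → ℂ)
    (hherm : ∀ i j, ρ j i = (starRingEnd ℂ) (ρ i j))
    (hpos : ∀ (s : Finset ℕ) (v : ℕ → ℂ),
      0 ≤ (∑ i ∈ s, ∑ j ∈ s, (starRingEnd ℂ) (v i) * ρ i j * v j).re)
    (hsum : Summable fun i => (ρ i i).re)
    (htr : ∑' i, (ρ i i).re = 1) :
    ∃ q₀ : ℕ, p ≤ q₀ ∧
      (∀ q, p ≤ q → hetWeight t k l p q ≤ hetWeight t k l p q₀) ∧
      Summable (fun j : ℕ =>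
        ρ (k + (p + j)) (l + (p + j)) * (hetWeight t k l p (p + j) : ℂ)) ∧
      ‖∑' j : ℕ, ρ (k + (p + j)) (l + (p + j)) * (hetWeight t k l p (p + j) : ℂ)‖ ≤
        hetWeight t k l p q₀ :=
  heterodyne_bias_tight_bound_general t ht0 ht1 k l p ρ hherm hpos hsum htr
end

section
/- Fix t ∈ (0,1), k, l ∈ ℕ, p ≥ 1, and define h(q) = t^q · C(q−1, p−1) · √(C(k+q, k) · C(l+q, l)) for integers q ≥ p. Then h(q+1) ≤ h(q) if and only if t ≤ (1 − (p−1)/q) · √(1 − k/(k+q+1)) · √(1 − l/(l+q+1)); moreover, the right-hand side of this condition is a nondecreasing function of q ≥ p. Consequently h is unimodal: it increases up to its maximum and decreases thereafter. -/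
open Filter Topology

theorem Nat.cast_choose_succ_mul_one_sub_div {K : Type*} [Field K] [CharZero K] (n k : ℕ) :
    ((n + 1).choose k : K) * (1 - k / (n + 1)) = n.choose k := by
  rcases le_or_gt k (n + 1) with hk | hk
  · have h := Nat.choose_mul_succ_eq n k
    rw [← Nat.cast_inj (R := K)] at h
    push_cast [hk] at h
    field_simp
    linear_combination -h
  · simp [Nat.choose_eq_zero_of_lt hk, Nat.choose_eq_zero_of_lt (Nat.lt_of_succ_lt hk)]

lemma one_sub_div_nonneg_of_le {K : Type*} [Field K] [LinearOrder K] [IsStrictOrderedRing K]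
    {a b : K} (hab : a ≤ b) (hb : 0 ≤ b) : 0 ≤ 1 - a / b :=
  sub_nonneg.2 (div_le_one_of_le₀ hab hb)

noncomputable def hetThreshold (k l p q : ℕ) : ℝ :=
  (1 - ((p : ℝ) - 1) / q) *
    Real.sqrt (1 - (k : ℝ) / ((k : ℝ) + q + 1)) *
    Real.sqrt (1 - (l : ℝ) / ((l : ℝ) + q + 1))

lemma one_sub_pred_div_mul_choose {p : ℕ} (hp : 1 ≤ p) (q : ℕ) :
    (1 - ((p : ℝ) - 1) / q) * (q.choose (p - 1) : ℝ) = ((q - 1).choose (p - 1) : ℝ) := by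
  cases q with
  | zero => simp
  | succ n =>
    rw [mul_comm, ← Nat.cast_pred hp]
    push_cast
    exact Nat.cast_choose_succ_mul_one_sub_div n (p - 1)

lemma one_sub_div_mul_choose_add (k q : ℕ) :
    (1 - (k : ℝ) / (k + q + 1)) * ((k + (q + 1)).choose k : ℝ) = ((k + q).choose k : ℝ) := by
  rw [mul_comm, ← add_assoc]
  exact_mod_cast Nat.cast_choose_succ_mul_one_sub_div (k + q) k

lemma hetThreshold_mul_hetWeight_succ (t : ℝ) (k l : ℕ) {p : ℕ} (hp : 1 ≤ p) (q : ℕ) :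
    hetThreshold k l p q * hetWeight t k l p (q + 1) = t * hetWeight t k l p q := by
  have hk := one_sub_div_nonneg_of_le (a := (k : ℝ)) (b := k + q + 1) (by linarith) (by positivity)
  have hl := one_sub_div_nonneg_of_le (a := (l : ℝ)) (b := l + q + 1) (by linarith) (by positivity)
  calc hetThreshold k l p q * hetWeight t k l p (q + 1)
      = t * t ^ q * ((1 - ((p : ℝ) - 1) / q) * (q.choose (p - 1) : ℝ)) *
          Real.sqrt ((1 - (k : ℝ) / (k + q + 1)) * ((k + (q + 1)).choose k : ℝ) *
            ((1 - (l : ℝ) / (l + q + 1)) * ((l + (q + 1)).choose l : ℝ))) := by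
        simp only [hetThreshold, hetWeight, Nat.add_sub_cancel, pow_succ]
        rw [Real.sqrt_mul (Nat.cast_nonneg _), Real.sqrt_mul (mul_nonneg hk (Nat.cast_nonneg _)),
          Real.sqrt_mul hk, Real.sqrt_mul hl]
        ring
    _ = t * hetWeight t k l p q := by
        rw [one_sub_pred_div_mul_choose hp, one_sub_div_mul_choose_add,
          one_sub_div_mul_choose_add, hetWeight]
        ring

lemma hetWeight_pos {t : ℝ} (ht : 0 < t) (k l : ℕ) {p q : ℕ} (hpq : p ≤ q) :
    0 < hetWeight t k l p q := by
  unfold hetWeight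
  have := Nat.choose_pos (show p - 1 ≤ q - 1 by omega)
  have := Nat.choose_pos (Nat.le_add_right k q)
  have := Nat.choose_pos (Nat.le_add_right l q)
  positivity

lemma hetWeight_succ_le_iff {t : ℝ} (ht : 0 < t) (k l : ℕ) {p q : ℕ} (hp : 1 ≤ p)
    (hpq : p ≤ q + 1) :
    hetWeight t k l p (q + 1) ≤ hetWeight t k l p q ↔ t ≤ hetThreshold k l p q := by
  rw [← mul_le_mul_iff_right₀ ht, ← hetThreshold_mul_hetWeight_succ t k l hp q,
    mul_le_mul_iff_left₀ (hetWeight_pos ht k l hpq)]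

lemma hetThreshold_mono (k l : ℕ) {p q q' : ℕ} (hp : 1 ≤ p) (hpq : p ≤ q) (hqq' : q ≤ q') :
    hetThreshold k l p q ≤ hetThreshold k l p q' := by
  have hq : (0 : ℝ) < q := by exact_mod_cast hp.trans hpq
  have hq' : (p : ℝ) - 1 ≤ q' := by
    have : (p : ℝ) ≤ q' := by exact_mod_cast hpq.trans hqq'
    linarith
  have h1 : 0 ≤ 1 - ((p : ℝ) - 1) / q' := one_sub_div_nonneg_of_le hq' (Nat.cast_nonneg _)
  unfold hetThreshold
  gcongr
  exact sub_nonneg.2 (by exact_mod_cast hp)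

lemma tendsto_sqrt_one_sub_div_add (k : ℕ) :
    Tendsto (fun q : ℕ => Real.sqrt (1 - (k : ℝ) / (k + q + 1))) atTop (𝓝 1) := by
  have : Tendsto (fun q : ℕ => (k : ℝ) + q + 1) atTop atTop :=
    tendsto_atTop_add_const_right _ 1
      (tendsto_atTop_add_const_left _ _ tendsto_natCast_atTop_atTop)
  simpa using ((tendsto_const_nhds.div_atTop this).const_sub 1).sqrt

lemma tendsto_hetThreshold (k l p : ℕ) : Tendsto (hetThreshold k l p) atTop (𝓝 1) := by
  have h := (tendsto_const_div_atTop_nhds_zero_nat ((p : ℝ) - 1)).const_sub 1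
  unfold hetThreshold
  simpa using (h.mul (tendsto_sqrt_one_sub_div_add k)).mul (tendsto_sqrt_one_sub_div_add l)

theorem exists_unimodal_of_succ_le_iff {α β : Type*} [LinearOrder α] [LinearOrder β]
    {h : ℕ → β} {F : ℕ → α} {t : α} {p : ℕ}
    (hF : ∀ q q', p ≤ q → q ≤ q' → F q ≤ F q')
    (hh : ∀ q, p ≤ q → (h (q + 1) ≤ h q ↔ t ≤ F q))
    (hex : ∃ q, p ≤ q ∧ t ≤ F q) :
    ∃ q₀, p ≤ q₀ ∧ (∀ q, p ≤ q → q < q₀ → h q ≤ h (q + 1)) ∧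
      ∀ q, q₀ ≤ q → h (q + 1) ≤ h q := by
  classical
  obtain ⟨hpq₀, htq₀⟩ := Nat.find_spec hex
  refine ⟨Nat.find hex, hpq₀, fun q hpq hq => ?_, fun q hq => ?_⟩
  · have hFq : F q < t := not_le.1 fun htF => Nat.find_min hex hq ⟨hpq, htF⟩
    exact (not_le.1 fun hdec => hFq.not_ge ((hh q hpq).1 hdec)).le
  · exact (hh q (hpq₀.trans hq)).2 (htq₀.trans (hF _ _ hpq₀ hq))

/-- Unimodality of the bias weight: for `t ∈ (0,1)` and `q ≥ p ≥ 1`,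
`h(q+1) ≤ h(q)` iff `t ≤ (1 − (p−1)/q)·√(1 − k/(k+q+1))·√(1 − l/(l+q+1))`,
the right-hand side is nondecreasing in `q`, and consequently `h` increases up
to some maximizing index and decreases thereafter. -/
theorem hetWeight_unimodal (t : ℝ) (ht0 : 0 < t) (ht1 : t < 1)
    (k l p : ℕ) (hp : 1 ≤ p) :
    (∀ q : ℕ, p ≤ q →
      (hetWeight t k l p (q + 1) ≤ hetWeight t k l p q ↔
        t ≤ (1 - ((p : ℝ) - 1) / q) *
          Real.sqrt (1 - (k : ℝ) / ((k : ℝ) + q + 1)) *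
          Real.sqrt (1 - (l : ℝ) / ((l : ℝ) + q + 1)))) ∧
    (∀ q q' : ℕ, p ≤ q → q ≤ q' →
      (1 - ((p : ℝ) - 1) / q) *
          Real.sqrt (1 - (k : ℝ) / ((k : ℝ) + q + 1)) *
          Real.sqrt (1 - (l : ℝ) / ((l : ℝ) + q + 1)) ≤
        (1 - ((p : ℝ) - 1) / q') *
          Real.sqrt (1 - (k : ℝ) / ((k : ℝ) + q' + 1)) *
          Real.sqrt (1 - (l : ℝ) / ((l : ℝ) + q' + 1))) ∧
    (∃ q₀ : ℕ, p ≤ q₀ ∧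
      (∀ q : ℕ, p ≤ q → q < q₀ → hetWeight t k l p q ≤ hetWeight t k l p (q + 1)) ∧
      (∀ q : ℕ, q₀ ≤ q → hetWeight t k l p (q + 1) ≤ hetWeight t k l p q)) := by
  have hiff (q : ℕ) (hq : p ≤ q) := hetWeight_succ_le_iff ht0 k l hp (Nat.le_succ_of_le hq)
  have hmono (q q' : ℕ) (hq : p ≤ q) (hqq' : q ≤ q') := hetThreshold_mono k l hp hq hqq'
  have hex : ∃ q, p ≤ q ∧ t ≤ hetThreshold k l p q :=
    ((eventually_ge_atTop p).and
      ((tendsto_hetThreshold k l p).eventually (eventually_ge_nhds ht1))).exists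
  exact ⟨hiff, hmono, exists_unimodal_of_succ_le_iff hmono hiff hex⟩
end
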